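/- For a discrete random variable E taking values in a finite set, if a decoder samples its estimate Ê from the posterior distribution Pr(E = · | S = s) independently of E (given S), then the probability that Ê ≠ E is at least the error probability of the MAP decoder (which outputs an argmax of the posterior) and at most twice the MAP error probability. -/
import Mathlib


/-- MAP vs sampling decoder: the sampling decoder's error probability is between
the MAP error probability and twice the MAP error probability. -/
theorem sampling_vs_map {E S : Type*} [Fintype E] [Fintype S] [DecidableEq E]
    (joint : E → S → ℝ)
    (hnn : ∀ e s, 0 ≤ joint e s)
    (hsum : ∑ e, ∑ s, joint e s = 1)
    (hpos : ∀ s, 0 < ∑ e, joint e s)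
    (est : S → E) (hMAP : ∀ s e, joint e s ≤ joint (est s) s)
    (PMAP PS : ℝ)
    (hPMAP : PMAP = ∑ s, ∑ e, if e = est s then 0 else joint e s)
    (hPS : PS = ∑ s, ∑ e, ∑ e',
      if e' = e then 0 else joint e s * (joint e' s / ∑ e'', joint e'' s)) :
    PMAP ≤ PS ∧ PS ≤ 2 * PMAP := by
  subst hPMAP hPS
  -- closed form of the MAP term
  have hPM : ∀ s, (∑ e, if e = est s then (0:ℝ) else joint e s)
      = (∑ e, joint e s) - joint (est s) s := by
    intro s
    have h : ∀ e ∈ Finset.univ, (if e = est s then (0:ℝ) else joint e s)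
        = joint e s - (if e = est s then joint e s else 0) := by
      intro e _; split <;> simp [*]
    rw [Finset.sum_congr rfl h, Finset.sum_sub_distrib,
      Finset.sum_ite_eq' Finset.univ (est s) (fun e => joint e s)]
    simp
  -- closed form of the sampling term
  have hPSs : ∀ s, (∑ e, ∑ e', if e' = e then (0:ℝ) else
      joint e s * (joint e' s / ∑ e'', joint e'' s))
      = (∑ e, joint e s)
        - (∑ e, joint e s * joint e s) / (∑ e, joint e s) := by
    intro s
    have hT := (hpos s).ne'
    have h1 : ∀ e ∈ Finset.univ, (∑ e', if e' = e then (0:ℝ) else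
        joint e s * (joint e' s / ∑ e'', joint e'' s))
        = joint e s - joint e s * joint e s / (∑ e'', joint e'' s) := by
      intro e _
      have h : ∀ e' ∈ Finset.univ, (if e' = e then (0:ℝ) else
          joint e s * (joint e' s / ∑ e'', joint e'' s))
          = joint e s * (joint e' s / ∑ e'', joint e'' s)
            - (if e' = e then joint e s * (joint e' s / ∑ e'', joint e'' s)
               else 0) := by
        intro e' _; split <;> simp [*]
      rw [Finset.sum_congr rfl h, Finset.sum_sub_distrib,
        Finset.sum_ite_eq' Finset.univ e
          (fun e' => joint e s * (joint e' s / ∑ e'', joint e'' s))]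
      have h2 : (∑ e', joint e s * (joint e' s / ∑ e'', joint e'' s))
          = joint e s := by
        rw [← Finset.mul_sum, ← Finset.sum_div, div_self hT, mul_one]
      rw [h2]
      simp [mul_div_assoc]
    rw [Finset.sum_congr rfl h1, Finset.sum_sub_distrib, Finset.sum_div]
  -- pointwise facts
  have key : ∀ s : S,
      ((∑ e, joint e s) - joint (est s) s
        ≤ (∑ e, joint e s) - (∑ e, joint e s * joint e s) / (∑ e, joint e s))
      ∧ ((∑ e, joint e s) - (∑ e, joint e s * joint e s) / (∑ e, joint e s)
        ≤ 2 * ((∑ e, joint e s) - joint (est s) s)) := by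
    intro s
    set T := ∑ e, joint e s with hT
    set m := joint (est s) s with hm
    set Q := ∑ e, joint e s * joint e s with hQ
    have hTpos : 0 < T := hpos s
    have hQm : Q ≤ m * T := by
      rw [hQ, hT, Finset.mul_sum]
      exact Finset.sum_le_sum fun e _ =>
        mul_le_mul_of_nonneg_right (hMAP s e) (hnn e s)
    have hmQ : m * m ≤ Q := by
      have := Finset.single_le_sum (f := fun e => joint e s * joint e s)
        (fun e _ => mul_nonneg (hnn e s) (hnn e s)) (Finset.mem_univ (est s))
      simpa using this
    have hdiv1 : Q / T ≤ m := by
      rw [div_le_iff₀ hTpos]; exact hQm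
    have hdiv2 : 2 * m - T ≤ Q / T := by
      rw [le_div_iff₀ hTpos]
      nlinarith [sq_nonneg (m - T)]
    constructor <;> linarith
  constructor
  · apply Finset.sum_le_sum
    intro s _
    rw [hPM s, hPSs s]
    exact (key s).1
  · rw [Finset.mul_sum]
    apply Finset.sum_le_sum
    intro s _
    rw [hPM s, hPSs s]
    exact (key s).2
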